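/- Let q(s) be a monic real Hurwitz stable polynomial of degree n and let p(s), r(s) be real polynomials with deg p = n, deg r ≤ n, and suppose Re[p(jω)/q(jω)] > 0 for all real ω. Then there exists δ₀ > 0 such that for all 0 < δ < δ₀ and all real ω, Re[(p(jω) + δ r(jω))/q(jω)] > 0, provided additionally that the leading coefficient behavior ensures positivity at infinity: specifically assume deg r < n or the leading coefficients of p and r are both positive. -/

import Mathlib

open Polynomial Complex

noncomputable def evalI (p : Polynomial ℝ) (ω : ℝ) : ℂ :=
  Polynomial.aeval ((ω : ℂ) * Complex.I) p

def HurwitzStable (p : Polynomial ℝ) : Prop :=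
  ∀ z : ℂ, Polynomial.aeval z p = 0 → z.re < 0

def SPR (p q : Polynomial ℝ) : Prop :=
  p.degree = q.degree ∧ HurwitzStable q ∧
    ∀ ω : ℝ, 0 < (evalI p ω / evalI q ω).re

/-!
On the imaginary axis `Re (s/q)` is continuous, and as `|ω| → ∞` it tends to `s_n / q_n`, because
`s - (s_n / q_n) q` has degree below `n` and so is `o(q)`. Hence `Re (r/q) / Re (p/q)` is continuous
with a finite limit at infinity (the limit of `Re (p/q)` being `p_n / q_n ≠ 0`), so it is bounded,
say by `M`, and `Re ((p + δ r)/q) = Re (p/q) · (1 + δ · Re (r/q) / Re (p/q)) > 0` whenever `|δ| < 1/M`.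
-/

open Filter Topology Bornology

namespace Polynomial

theorem degree_sub_C_mul_lt_of_natDegree_le {K : Type*} [Field K] {P Q : K[X]} (hQ : Q ≠ 0)
    (hdeg : P.natDegree ≤ Q.natDegree) :
    (P - C (P.coeff Q.natDegree / Q.leadingCoeff) * Q).degree < Q.degree := by
  rw [degree_eq_natDegree hQ, degree_lt_iff_coeff_zero]
  intro m hm
  obtain rfl | hlt := (Nat.cast_le.mp hm : Q.natDegree ≤ m).eq_or_lt
  · rw [coeff_sub, coeff_C_mul, coeff_natDegree, div_mul_cancel₀ _ (leadingCoeff_ne_zero.2 hQ),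
      sub_self]
  · rw [coeff_sub, coeff_C_mul, coeff_eq_zero_of_natDegree_lt (hdeg.trans_lt hlt),
      coeff_eq_zero_of_natDegree_lt hlt, mul_zero, sub_zero]

theorem tendsto_eval_div_eval_cobounded {𝕜 : Type*} [NormedField 𝕜] {P Q : 𝕜[X]} (hQ : Q ≠ 0)
    (hdeg : P.natDegree ≤ Q.natDegree) :
    Tendsto (fun z => P.eval z / Q.eval z) (cobounded 𝕜)
      (𝓝 (P.coeff Q.natDegree / Q.leadingCoeff)) := by
  set c := P.coeff Q.natDegree / Q.leadingCoeff
  have hrem : Tendsto (fun z => (P - C c * Q).eval z / Q.eval z) (cobounded 𝕜) (𝓝 0) :=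
    (isLittleO_cobounded_of_degree_lt
      (degree_sub_C_mul_lt_of_natDegree_le hQ hdeg)).tendsto_div_nhds_zero
  have hnonroot : ∀ᶠ z in cobounded 𝕜, Q.eval z ≠ 0 :=
    Bornology.le_cofinite 𝕜 (eventually_cofinite_not_isRoot hQ)
  refine (by simpa using hrem.const_add c : Tendsto _ _ (𝓝 c)).congr' ?_
  filter_upwards [hnonroot] with z hz
  rw [sub_div, mul_div_cancel_right₀ _ hz, add_sub_cancel]

end Polynomial

theorem Bornology.IsBounded.range_of_tendsto_cocompact {X E : Type*} [TopologicalSpace X]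
    [PseudoMetricSpace E] {f : X → E} (hf : Continuous f) {b : E}
    (hlim : Tendsto f (cocompact X) (𝓝 b)) : IsBounded (Set.range f) := by
  obtain ⟨K, hK, hKc⟩ := mem_cocompact.mp (hlim (Metric.ball_mem_nhds b one_pos))
  refine ((hK.image hf).isBounded.union (Metric.isBounded_ball (x := b) (r := 1))).subset ?_
  rintro _ ⟨x, rfl⟩
  by_cases hx : x ∈ K
  · exact Or.inl ⟨x, hx, rfl⟩
  · exact Or.inr (hKc hx)

theorem exists_forall_pos_add_mul_pos {X : Type*} [TopologicalSpace X] {F G : X → ℝ}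
    (hF : Continuous F) (hG : Continuous G) (hFpos : ∀ x, 0 < F x) {a b : ℝ} (ha : a ≠ 0)
    (hFlim : Tendsto F (cocompact X) (𝓝 a)) (hGlim : Tendsto G (cocompact X) (𝓝 b)) :
    ∃ δ₀ > 0, ∀ δ : ℝ, |δ| < δ₀ → ∀ x, 0 < F x + δ * G x := by
  have hFne : ∀ x, F x ≠ 0 := fun x => (hFpos x).ne'
  obtain ⟨M, hM0, hM⟩ := (IsBounded.range_of_tendsto_cocompact (hG.div hF hFne)
    (hGlim.div hFlim ha)).exists_pos_norm_le
  refine ⟨M⁻¹, inv_pos.mpr hM0, fun δ hδ x => ?_⟩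
  have hsmall : |δ * (G x / F x)| < 1 := calc
    |δ * (G x / F x)| = |δ| * ‖G x / F x‖ := abs_mul _ _
    _ ≤ |δ| * M := by gcongr; exact hM _ ⟨x, rfl⟩
    _ < M⁻¹ * M := by gcongr
    _ = 1 := inv_mul_cancel₀ hM0.ne'
  calc 0 < F x * (1 + δ * (G x / F x)) :=
        mul_pos (hFpos x) (by linarith [neg_abs_le (δ * (G x / F x))])
    _ = F x + δ * G x := by rw [mul_add, mul_one, mul_left_comm, mul_div_cancel₀ _ (hFne x)]

theorem evalI_eq_eval_map (s : ℝ[X]) (ω : ℝ) :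
    evalI s ω = (s.map (algebraMap ℝ ℂ)).eval ((ω : ℂ) * I) := by
  rw [evalI, aeval_def, eval_map]

theorem continuous_evalI (s : ℝ[X]) : Continuous (evalI s) :=
  (Polynomial.continuous_aeval s).comp (by fun_prop)

theorem HurwitzStable.evalI_ne_zero {q : ℝ[X]} (hq : HurwitzStable q) (ω : ℝ) :
    evalI q ω ≠ 0 := fun h => by simpa using hq _ h

theorem tendsto_re_evalI_div_evalI_cocompact {s q : ℝ[X]} (hq : q ≠ 0)
    (hdeg : s.natDegree ≤ q.natDegree) :
    Tendsto (fun ω => (evalI s ω / evalI q ω).re) (cocompact ℝ)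
      (𝓝 (s.coeff q.natDegree / q.leadingCoeff)) := by
  have hI : Tendsto (fun ω : ℝ => (ω : ℂ) * I) (cocompact ℝ) (cobounded ℂ) := by
    rw [← Metric.cobounded_eq_cocompact, ← tendsto_norm_atTop_iff_cobounded]
    exact tendsto_norm_cobounded_atTop.congr fun ω => by simp
  have hlim := (tendsto_eval_div_eval_cobounded (P := s.map (algebraMap ℝ ℂ))
    (map_ne_zero (f := algebraMap ℝ ℂ) hq) (by simpa only [natDegree_map] using hdeg)).comp hI
  convert (continuous_re.tendsto _).comp hlim using 2
  · simp [evalI_eq_eval_map]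
  · simp

theorem re_pos_perturbation_general (n : ℕ) (p q r : Polynomial ℝ)
    (hqdeg : q.natDegree = n) (hqH : HurwitzStable q)
    (hpdeg : p.natDegree = n) (hrdeg : r.natDegree ≤ n)
    (hpos : ∀ ω : ℝ, 0 < (evalI p ω / evalI q ω).re) :
    ∃ δ₀ > (0 : ℝ), ∀ δ : ℝ, 0 < δ → δ < δ₀ → ∀ ω : ℝ,
      0 < ((evalI p ω + (δ : ℂ) * evalI r ω) / evalI q ω).re := by
  have hq : ∀ ω, evalI q ω ≠ 0 := hqH.evalI_ne_zero
  have hq0 : q ≠ 0 := by rintro rfl; exact hq 0 (by simp [evalI])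
  have hp0 : p ≠ 0 := by rintro rfl; simpa [evalI] using hpos 0
  have hcont (s : ℝ[X]) : Continuous fun ω => (evalI s ω / evalI q ω).re :=
    continuous_re.comp ((continuous_evalI s).div (continuous_evalI q) hq)
  have hlim_ne : p.coeff q.natDegree / q.leadingCoeff ≠ 0 :=
    div_ne_zero (hqdeg ▸ hpdeg ▸ leadingCoeff_ne_zero.2 hp0) (leadingCoeff_ne_zero.2 hq0)
  obtain ⟨δ₀, hδ₀, hpert⟩ := exists_forall_pos_add_mul_pos (hcont p) (hcont r) hpos hlim_ne
    (tendsto_re_evalI_div_evalI_cocompact hq0 (hpdeg.trans hqdeg.symm).le)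
    (tendsto_re_evalI_div_evalI_cocompact hq0 (hqdeg ▸ hrdeg))
  refine ⟨δ₀, hδ₀, fun δ hδ hδδ₀ ω => ?_⟩
  rw [add_div, mul_div_assoc, add_re, re_ofReal_mul]
  exact hpert δ (by rwa [abs_of_pos hδ]) ω

theorem re_pos_perturbation (n : ℕ) (p q r : Polynomial ℝ)
    (hqmon : q.Monic) (hqdeg : q.natDegree = n) (hqH : HurwitzStable q)
    (hpdeg : p.natDegree = n) (hrdeg : r.natDegree ≤ n)
    (hpos : ∀ ω : ℝ, 0 < (evalI p ω / evalI q ω).re)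
    (hlead : r.natDegree < n ∨ (0 < p.leadingCoeff ∧ 0 < r.leadingCoeff)) :
    ∃ δ₀ > (0 : ℝ), ∀ δ : ℝ, 0 < δ → δ < δ₀ → ∀ ω : ℝ,
      0 < ((evalI p ω + (δ : ℂ) * evalI r ω) / evalI q ω).re :=
  re_pos_perturbation_general n p q r hqdeg hqH hpdeg hrdeg hpos
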